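/- For all graphs G₁ = (V,E₁) and G₂ = (V,E₂) on a common finite vertex set V with maximum degree at most Δ, and every vertex v of Ĝ, the total weight of the Ĝ-neighborhood of v satisfies Σ_{w ∈ N_Ĝ(v)} W(w) ≤ 4Δ. -/

import Mathlib

/-!
The weight of a vertex `w` of `Ĝ` is the number of graphs `Gᵢ` containing the edge `w`, so the
weight of the neighbourhood of `v` is the number of its `Ĝ`-neighbours in `E₁` plus the number
in `E₂`. The neighbours in `Eᵢ` are edges of `Gᵢ` through one of the two endpoints of `v`, and
there are at most `2Δ` of those.
-/

open Classical

noncomputable section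

/-- The vertex set of the graph `Ĝ`: the edges of `G₁ ∪ G₂`. -/
abbrev HatVertex {V : Type} (G₁ G₂ : SimpleGraph V) : Type :=
  {e : Sym2 V // e ∈ G₁.edgeSet ∪ G₂.edgeSet}

/-- The graph `Ĝ`: the union of the line graphs of `G₁` and `G₂`, identifying vertices
corresponding to edges appearing in both graphs.  Two distinct edges are adjacent iff they
share an endpoint and both lie in `E₁` or both lie in `E₂`. -/
def hatG {V : Type} (G₁ G₂ : SimpleGraph V) : SimpleGraph (HatVertex G₁ G₂) where
  Adj e f := e ≠ f ∧ (∃ x : V, x ∈ e.1 ∧ x ∈ f.1) ∧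
    ((e.1 ∈ G₁.edgeSet ∧ f.1 ∈ G₁.edgeSet) ∨ (e.1 ∈ G₂.edgeSet ∧ f.1 ∈ G₂.edgeSet))
  symm := by
    refine ⟨?_⟩
    rintro e f ⟨h1, ⟨x, hx1, hx2⟩, h3⟩
    exact ⟨h1.symm, ⟨x, hx2, hx1⟩, by tauto⟩
  loopless := by
    refine ⟨?_⟩
    rintro e ⟨h1, -, -⟩
    exact h1 rfl

instance {V : Type} [Fintype V] (G₁ G₂ : SimpleGraph V) : Fintype (HatVertex G₁ G₂) :=
  Fintype.ofFinite _

/-- The weight of a vertex of `Ĝ`: `2` if the corresponding edge lies in both graphs,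
`1` otherwise. -/
def hatWeight {V : Type} (G₁ G₂ : SimpleGraph V) (e : HatVertex G₁ G₂) : ℕ :=
  if e.1 ∈ G₁.edgeSet ∧ e.1 ∈ G₂.edgeSet then 2 else 1

/-- A proper vertex coloring of a graph. -/
def IsProperVertexColoring {α β : Type} (H : SimpleGraph α) (σ : α → β) : Prop :=
  ∀ u w, H.Adj u w → σ u ≠ σ w

/-- A simultaneous edge `k`-coloring of the pair `(G₁, G₂)`. -/
def IsSimultaneousEdgeColoring {V : Type} (G₁ G₂ : SimpleGraph V) {k : ℕ}
    (φ : HatVertex G₁ G₂ → Fin k) : Prop :=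
  (∀ e f : HatVertex G₁ G₂, e.1 ∈ G₁.edgeSet → f.1 ∈ G₁.edgeSet → e ≠ f →
      (∃ x : V, x ∈ e.1 ∧ x ∈ f.1) → φ e ≠ φ f) ∧
  (∀ e f : HatVertex G₁ G₂, e.1 ∈ G₂.edgeSet → f.1 ∈ G₂.edgeSet → e ≠ f →
      (∃ x : V, x ∈ e.1 ∧ x ∈ f.1) → φ e ≠ φ f)

/-- The weighted Hamming distance `Ĥ`. -/
def hatH {V : Type} [Fintype V] (G₁ G₂ : SimpleGraph V) {k : ℕ}
    (σ τ : HatVertex G₁ G₂ → Fin k) : ℝ :=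
  ∑ v : HatVertex G₁ G₂, if σ v ≠ τ v then (hatWeight G₁ G₂ v : ℝ) else 0

/-- One step of a Markov chain applied to a distribution. -/
def stepDist {Ω : Type} [Fintype Ω] (P : Ω → Ω → ℝ) (μ : Ω → ℝ) : Ω → ℝ :=
  fun τ => ∑ σ, μ σ * P σ τ

/-- Total variation distance between two distributions on a finite state space. -/
def tvDist {Ω : Type} [Fintype Ω] (μ ν : Ω → ℝ) : ℝ :=
  (∑ x, |μ x - ν x|) / 2

/-- The point mass at a state. -/
def deltaDist {Ω : Type} (x : Ω) : Ω → ℝ :=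
  fun y => if y = x then 1 else 0

/-- A coupling of two distributions on a finite set. -/
def IsCoupling {Ω : Type} [Fintype Ω] (γ : Ω × Ω → ℝ) (μ ν : Ω → ℝ) : Prop :=
  (∀ q, 0 ≤ γ q) ∧ (∀ a, ∑ b, γ (a, b) = μ a) ∧ (∀ b, ∑ a, γ (a, b) = ν b)

/-- The result of a Glauber update at `(v, c)`: recolor `v` with `c` provided no
`Ĝ`-neighbor of `v` has color `c`. -/
def glauberStep {V : Type} (G₁ G₂ : SimpleGraph V) {k : ℕ}
    (σ : HatVertex G₁ G₂ → Fin k) (v : HatVertex G₁ G₂) (c : Fin k) :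
    HatVertex G₁ G₂ → Fin k :=
  if ∀ w, (hatG G₁ G₂).Adj v w → σ w ≠ c then Function.update σ v c else σ

/-- The transition matrix of the Glauber dynamics on `{1,…,k}^{V̂}`. -/
def glauberP {V : Type} [Fintype V] (G₁ G₂ : SimpleGraph V) (k : ℕ)
    (σ τ : HatVertex G₁ G₂ → Fin k) : ℝ :=
  (∑ v : HatVertex G₁ G₂, ∑ c : Fin k,
      if glauberStep G₁ G₂ σ v c = τ then (1 : ℝ) else 0) /
    ((Fintype.card (HatVertex G₁ G₂) : ℝ) * (k : ℝ))

/-- The uniform distribution over the proper vertex `k`-colorings of `Ĝ`,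
viewed as a distribution on all of `{1,…,k}^{V̂}`. -/
def uniformProper {V : Type} [Fintype V] (G₁ G₂ : SimpleGraph V) (k : ℕ) :
    (HatVertex G₁ G₂ → Fin k) → ℝ :=
  fun σ => if IsProperVertexColoring (hatG G₁ G₂) σ then
      (1 : ℝ) / (Nat.card {τ : HatVertex G₁ G₂ → Fin k //
        IsProperVertexColoring (hatG G₁ G₂) τ} : ℝ)
    else 0

/-- The graph of `(σ(v), c)`-alternating steps. -/
def clusterGraph {α β : Type} (H : SimpleGraph α) (σ : α → β) (v : α) (c : β) :
    SimpleGraph α where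
  Adj w w' := H.Adj w w' ∧ ((σ w = σ v ∧ σ w' = c) ∨ (σ w = c ∧ σ w' = σ v))
  symm := by
    refine ⟨?_⟩
    rintro w w' ⟨h1, h2⟩
    exact ⟨h1.symm, by tauto⟩
  loopless := by
    refine ⟨?_⟩
    rintro w ⟨h1, -⟩
    exact H.ne_of_adj h1 rfl

/-- The cluster `S_σ(v,c)`: the set of vertices reachable from `v` by a
`(σ(v), c)`-alternating path, with `S_σ(v, σ(v)) = {v}`. -/
def cluster {α β : Type} (H : SimpleGraph α) (σ : α → β) (v : α) (c : β) : Set α :=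
  if c = σ v then {v} else {w | (clusterGraph H σ v c).Reachable v w}

/-- The coloring obtained by interchanging the colors `σ(v)` and `c` on the cluster
`S_σ(v,c)`. -/
def flipColoring {α β : Type} (H : SimpleGraph α) (σ : α → β) (v : α) (c : β) : α → β :=
  fun w => if w ∈ cluster H σ v c then
      if σ w = σ v then c else if σ w = c then σ v else σ w
    else σ w

/-- The transition matrix of the flip dynamics with flip parameters `p`. -/
def flipP {α : Type} [Fintype α] (H : SimpleGraph α) (k : ℕ) (p : ℕ → ℝ)
    (σ τ : α → Fin k) : ℝ :=
  (∑ v : α, ∑ c : Fin k,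
      ((p (Nat.card (cluster H σ v c)) / (Nat.card (cluster H σ v c) : ℝ)) *
          (if flipColoring H σ v c = τ then (1 : ℝ) else 0) +
        (1 - p (Nat.card (cluster H σ v c)) / (Nat.card (cluster H σ v c) : ℝ)) *
          (if σ = τ then (1 : ℝ) else 0))) /
    ((Fintype.card α : ℝ) * (k : ℝ))

/-- The explicit flip parameters `P₁ = 1, P₂ = 137/650, P₃ = 77/650, P₄ = 47/650,
P₅ = 27/650, P₆ = 12/650`, and `P_i = 0` for `i ≥ 7`. -/
def flipParams : ℕ → ℝ := fun i =>
  if i = 1 then 1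
  else if i = 2 then 137 / 650
  else if i = 3 then 77 / 650
  else if i = 4 then 47 / 650
  else if i = 5 then 27 / 650
  else if i = 6 then 12 / 650
  else 0

/-- The set of (not necessarily proper) `L`-colorings. -/
def ListColorings {α : Type} (L : α → Finset ℕ) : Type :=
  {f : α → ℕ // ∀ v, f v ∈ L v}

instance {α : Type} [Finite α] (L : α → Finset ℕ) : Finite (ListColorings L) :=
  Finite.of_injective
    (fun f => (fun v => (⟨f.1 v, f.2 v⟩ : {c : ℕ // c ∈ L v})))
    (by
      intro f g h
      apply Subtype.ext
      funext v
      exact congrArg Subtype.val (congrFun h v))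

instance {α : Type} [Fintype α] (L : α → Finset ℕ) : Fintype (ListColorings L) :=
  Fintype.ofFinite _

/-- The `i`-th smallest element of a finite set of natural numbers (0-indexed). -/
def nthColor (L : Finset ℕ) (i : ℕ) : ℕ :=
  (L.sort (· ≤ ·)).getD i 0

/-- A cluster is flippable if both of its colors belong to the list of every vertex in it. -/
def ListFlippable {α : Type} (H : SimpleGraph α) (L : α → Finset ℕ) (σ : α → ℕ)
    (v : α) (c : ℕ) : Prop :=
  ∀ w ∈ cluster H σ v c, σ v ∈ L w ∧ c ∈ L w

/-- The transition matrix of the flip dynamics for `L`-list colorings. -/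
def listFlipP {α : Type} [Fintype α] (H : SimpleGraph α) (L : α → Finset ℕ) (k : ℕ)
    (p : ℕ → ℝ) (σ τ : ListColorings L) : ℝ :=
  (∑ v : α, ∑ i : Fin k,
      ((if ListFlippable H L σ.1 v (nthColor (L v) i) then
          p (Nat.card (cluster H σ.1 v (nthColor (L v) i))) /
            (Nat.card (cluster H σ.1 v (nthColor (L v) i)) : ℝ)
        else 0) *
          (if flipColoring H σ.1 v (nthColor (L v) i) = τ.1 then (1 : ℝ) else 0) +
        (1 - (if ListFlippable H L σ.1 v (nthColor (L v) i) then
          p (Nat.card (cluster H σ.1 v (nthColor (L v) i))) /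
            (Nat.card (cluster H σ.1 v (nthColor (L v) i)) : ℝ)
        else 0)) *
          (if σ = τ then (1 : ℝ) else 0))) /
    ((Fintype.card α : ℝ) * (k : ℝ))

/-- The uniform distribution over the proper `L`-colorings. -/
def uniformProperList {α : Type} [Fintype α] (H : SimpleGraph α) (L : α → Finset ℕ) :
    ListColorings L → ℝ :=
  fun σ => if IsProperVertexColoring H σ.1 then
      (1 : ℝ) / (Nat.card {τ : ListColorings L // IsProperVertexColoring H τ.1} : ℝ)
    else 0

/-- Two states differ in exactly one coordinate. -/
def AdjOne {N S : Type} (σ ξ : N → S) : Prop :=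
  ∃ i, σ i ≠ ξ i ∧ ∀ j, j ≠ i → σ j = ξ j

/-- The set of total `Φ`-lengths of simple paths from `σ` to `ξ` inside `Ω` whose
consecutive states differ in exactly one coordinate. -/
def PathSums {N S : Type} (Ω : Finset (N → S)) (Φ : (N → S) → (N → S) → ℕ)
    (σ ξ : N → S) : Set ℕ :=
  {s | ∃ (ℓ : ℕ) (η : Fin (ℓ + 1) → (N → S)),
    (∀ i, η i ∈ Ω) ∧ Function.Injective η ∧
    η 0 = σ ∧ η (Fin.last ℓ) = ξ ∧
    (∀ i : Fin ℓ, AdjOne (η i.castSucc) (η i.succ)) ∧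
    s = ∑ i : Fin ℓ, Φ (η i.castSucc) (η i.succ)}

/-- A single move of the Glauber dynamics: recolor one vertex with a color not
appearing in its `Ĝ`-neighborhood. -/
def GlauberMove {V : Type} (G₁ G₂ : SimpleGraph V) {k : ℕ}
    (σ τ : HatVertex G₁ G₂ → Fin k) : Prop :=
  ∃ (v : HatVertex G₁ G₂) (c : Fin k),
    (∀ w, (hatG G₁ G₂).Adj v w → σ w ≠ c) ∧ τ = Function.update σ v c

end

namespace SimpleGraph

variable {V : Type*} (G : SimpleGraph V)

theorem ncard_incidenceSet_eq_ncard_neighborSet (x : V) :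
    (G.incidenceSet x).ncard = (G.neighborSet x).ncard := by
  simp_rw [← Nat.card_coe_set_eq]
  exact Nat.card_congr (G.incidenceSetEquivNeighborSet x)

theorem ncard_edges_meeting_le [Finite V] {Δ : ℕ} (hΔ : ∀ x, (G.neighborSet x).ncard ≤ Δ)
    (e : Sym2 V) : {f ∈ G.edgeSet | ∃ x ∈ e, x ∈ f}.ncard ≤ 2 * Δ := by
  induction e using Sym2.ind with
  | _ a b =>
  have hsub : {f ∈ G.edgeSet | ∃ x ∈ s(a, b), x ∈ f} ⊆ G.incidenceSet a ∪ G.incidenceSet b := by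
    rintro f ⟨hf, x, hx, hxf⟩
    rcases Sym2.mem_iff.mp hx with rfl | rfl
    · exact Or.inl ⟨hf, hxf⟩
    · exact Or.inr ⟨hf, hxf⟩
  calc {f ∈ G.edgeSet | ∃ x ∈ s(a, b), x ∈ f}.ncard
      ≤ (G.incidenceSet a ∪ G.incidenceSet b).ncard := Set.ncard_le_ncard hsub
    _ ≤ (G.incidenceSet a).ncard + (G.incidenceSet b).ncard := Set.ncard_union_le _ _
    _ ≤ 2 * Δ := by
      rw [ncard_incidenceSet_eq_ncard_neighborSet, ncard_incidenceSet_eq_ncard_neighborSet]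
      linarith [hΔ a, hΔ b]

end SimpleGraph

section HatGraph

variable {V : Type} {G₁ G₂ : SimpleGraph V}

theorem hatWeight_eq (w : HatVertex G₁ G₂) :
    hatWeight G₁ G₂ w =
      (if w.1 ∈ G₁.edgeSet then 1 else 0) + (if w.1 ∈ G₂.edgeSet then 1 else 0) := by
  rcases w with ⟨e, he | he⟩ <;> by_cases h₁ : e ∈ G₁.edgeSet <;> by_cases h₂ : e ∈ G₂.edgeSet <;>
    simp_all [hatWeight]

theorem sum_hatWeight_eq (s : Finset (HatVertex G₁ G₂)) :
    ∑ w ∈ s, hatWeight G₁ G₂ w =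
      (s.filter (·.1 ∈ G₁.edgeSet)).card + (s.filter (·.1 ∈ G₂.edgeSet)).card := by
  simp only [hatWeight_eq, Finset.sum_add_distrib, Finset.card_filter]

theorem card_hatG_adj_mem_edgeSet_le [Fintype V] (G : SimpleGraph V) {Δ : ℕ}
    (hΔ : ∀ x, (G.neighborSet x).ncard ≤ Δ) (v : HatVertex G₁ G₂) :
    (Finset.univ.filter fun w ↦ (hatG G₁ G₂).Adj v w ∧ w.1 ∈ G.edgeSet).card ≤ 2 * Δ := by
  rw [← Set.ncard_coe_finset, Finset.coe_filter_univ]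
  refine le_trans (Set.ncard_le_ncard_of_injOn Subtype.val ?_ Subtype.val_injective.injOn)
    (G.ncard_edges_meeting_le hΔ v.1)
  rintro w ⟨⟨-, ⟨x, hxv, hxw⟩, -⟩, hw⟩
  exact ⟨hw, x, hxv, hxw⟩

end HatGraph

theorem neighborhood_weight_le_general {V : Type} [Fintype V]
    (G₁ G₂ : SimpleGraph V) (Δ : ℕ)
    (h₁ : ∀ v : V, (G₁.neighborSet v).ncard ≤ Δ)
    (h₂ : ∀ v : V, (G₂.neighborSet v).ncard ≤ Δ)
    (v : HatVertex G₁ G₂) :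
    ∑ w ∈ Finset.univ.filter (fun w => (hatG G₁ G₂).Adj v w), hatWeight G₁ G₂ w ≤ 4 * Δ := by
  rw [sum_hatWeight_eq, Finset.filter_filter, Finset.filter_filter]
  linarith [card_hatG_adj_mem_edgeSet_le G₁ h₁ v, card_hatG_adj_mem_edgeSet_le G₂ h₂ v]

/-- For graphs `G₁, G₂` on a common finite vertex set with maximum degree at
most `Δ` and every vertex `v` of `Ĝ`, the total weight of the `Ĝ`-neighborhood of `v` is at
most `4Δ`. -/
theorem neighborhood_weight_le {V : Type} [Fintype V] [DecidableEq V]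
    (G₁ G₂ : SimpleGraph V) (Δ : ℕ)
    (h₁ : ∀ v : V, (G₁.neighborSet v).ncard ≤ Δ)
    (h₂ : ∀ v : V, (G₂.neighborSet v).ncard ≤ Δ)
    (v : HatVertex G₁ G₂) :
    ∑ w ∈ Finset.univ.filter (fun w => (hatG G₁ G₂).Adj v w), hatWeight G₁ G₂ w ≤ 4 * Δ :=
  neighborhood_weight_le_general G₁ G₂ Δ h₁ h₂ v
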